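/- Every tame valued field is algebraically maximal, and every separably tame valued field is separable-algebraically maximal. -/

import Mathlib

section Defs

variable {F : Type*} [Field F]

/-- x is algebraic over the subfield M. -/
def AlgOver (M : Subfield F) (x : F) : Prop :=
  ∃ f : Polynomial F, f ≠ 0 ∧ (∀ i, f.coeff i ∈ M) ∧ Polynomial.eval x f = 0

/-- x is separable algebraic over the subfield M. -/
def SepAlgOver (M : Subfield F) (x : F) : Prop :=
  ∃ f : Polynomial F, f ≠ 0 ∧ (∀ i, f.coeff i ∈ M) ∧ f.Separable ∧ Polynomial.eval x f = 0

/-- The degree [B : A] of an extension of subfields. -/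
noncomputable def sdeg {A B : Subfield F} (h : A ≤ B) : ℕ :=
  letI := (Subfield.inclusion h).toAlgebra
  Module.finrank A B

/-- The extension of subfields A ≤ B is finite. -/
def FinExt {A B : Subfield F} (h : A ≤ B) : Prop :=
  letI := (Subfield.inclusion h).toAlgebra
  Module.Finite A B

/-- A subfield M of F is henselian with respect to the valuation ring O of F. -/
def IsHenselianS (O : ValuationSubring F) (M : Subfield F) : Prop :=
  HenselianLocalRing (O.comap M.subtype)

/-- The residue field of the subfield M with respect to the valuation ring O. -/
noncomputable def resSubfield (O : ValuationSubring F) (M : Subfield F) :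
    Subfield (IsLocalRing.ResidueField O) :=
  Subfield.closure (IsLocalRing.residue O '' {a : O | (a : F) ∈ M})

/-- The value group of the subfield M with respect to the valuation ring O. -/
noncomputable def vgrp (O : ValuationSubring F) (M : Subfield F) : Subgroup (Fˣ ⧸ O.unitGroup) :=
  Subgroup.map (QuotientGroup.mk' O.unitGroup)
    (MonoidHom.range (Units.map (M.subtype.toMonoidHom)))

/-- (E|K) is a tame extension with respect to the valuation ring O: (TE1)-(TE3) hold
for all finite subextensions. -/
def TameExt (O : ValuationSubring F) (K E : Subfield F) : Prop :=
  K ≤ E ∧ ∀ (E' : Subfield F) (hKE' : K ≤ E'), E' ≤ E → FinExt hKE' →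
    ∃ hres : resSubfield O K ≤ resSubfield O E',
      (∀ q : ℕ, q.Prime → (q : IsLocalRing.ResidueField O) = 0 →
        ¬ q ∣ (vgrp O K).relIndex (vgrp O E')) ∧
      (∀ ξ, ξ ∈ resSubfield O E' → SepAlgOver (resSubfield O K) ξ) ∧
      sdeg hKE' = (vgrp O K).relIndex (vgrp O E') * sdeg hres

/-- (M|K) is an immediate extension with respect to the valuation ring O. -/
def IsImmediateV (O : ValuationSubring F) (K M : Subfield F) : Prop :=
  (∀ x ∈ M, x ≠ 0 → ∃ y ∈ K, y ≠ 0 ∧ x * y⁻¹ ∈ O ∧ y * x⁻¹ ∈ O) ∧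
  (∀ x ∈ M, x ∈ O → ∃ y ∈ K, (x - y) ∈ O ∧ (x - y ≠ 0 → (x - y)⁻¹ ∉ O))

end Defs

/-!
An immediate extension has trivial value group index and trivial residue degree. If it is
also tame, every finite subextension `E | K` satisfies `[E : K] = (vE : vK) [Ev : Kv] = 1`,
so `E = K`; since each element of an algebraic extension lies in such an `E`, the extension is
trivial.
-/

section TameImmediate

variable {F : Type*} [Field F]

theorem sdeg_eq_one_iff {A B : Subfield F} (h : A ≤ B) : sdeg h = 1 ↔ B ≤ A := by
  let := (Subfield.inclusion h).toAlgebra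
  rw [sdeg, Algebra.finrank_eq_one_iff_bijective_algebraMap, RingHom.algebraMap_toAlgebra]
  refine ⟨fun hb x hx => ?_, fun hBA =>
    ⟨(Subfield.inclusion h).injective, fun y => ⟨⟨y, hBA y.2⟩, rfl⟩⟩⟩
  obtain ⟨a, ha⟩ := hb.2 ⟨x, hx⟩
  have hax : (a : F) = x := congrArg Subtype.val ha
  exact hax ▸ a.2

theorem AlgOver.isIntegral {K : Subfield F} {x : F} (h : AlgOver K x) : IsIntegral K x := by
  obtain ⟨f, hf0, hfK, hfx⟩ := h
  obtain ⟨p, rfl⟩ := (Polynomial.mem_lifts f).1 <|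
    (Polynomial.lifts_iff_coeff_lifts (f := algebraMap K F) f).2 fun n => ⟨⟨_, hfK n⟩, rfl⟩
  refine isAlgebraic_iff_isIntegral.1 ⟨p, fun hp => hf0 (by rw [hp, Polynomial.map_zero]), ?_⟩
  rwa [Polynomial.aeval_def, ← Polynomial.eval_map]

theorem ValuationSubring.valuation_eq_one_of_mem_of_inv_mem (A : ValuationSubring F) {x : F}
    (hx0 : x ≠ 0) (hx : x ∈ A) (hx' : x⁻¹ ∈ A) : A.valuation x = 1 :=
  le_antisymm ((A.valuation_le_one_iff x).2 hx) <| not_lt.1 fun hlt =>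
    (A.mem_nonunits_iff_or.1 (A.mem_nonunits_iff.2 hlt)).elim hx0 (· hx')

theorem exists_finExt_mem_le {K M : Subfield F} (hKM : K ≤ M) {x : F} (hx : IsIntegral K x)
    (hxM : x ∈ M) : ∃ (E : Subfield F) (hKE : K ≤ E), FinExt hKE ∧ x ∈ E ∧ E ≤ M := by
  let L := IntermediateField.adjoin K {x}
  have : FiniteDimensional K L := IntermediateField.adjoin.finiteDimensional hx
  have hKL : K ≤ L.toSubfield := fun k hk => L.algebraMap_mem ⟨k, hk⟩
  refine ⟨L.toSubfield, hKL, ?_, IntermediateField.mem_adjoin_simple_self K x, ?_⟩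
  · let := (Subfield.inclusion hKL).toAlgebra
    exact Module.Finite.of_surjective (M := L)
      (⟨⟨fun a => ⟨a.1, a.2⟩, fun _ _ => rfl⟩, fun _ _ => rfl⟩ : L →ₗ[K] L.toSubfield)
      fun e => ⟨⟨e.1, e.2⟩, rfl⟩
  · exact (IntermediateField.adjoin_simple_le_iff
      (K := M.toIntermediateField fun k => hKM k.2)).2 hxM

theorem IsImmediateV.vgrp_le {O : ValuationSubring F} {K M E : Subfield F}
    (him : IsImmediateV O K M) (hEM : E ≤ M) : vgrp O E ≤ vgrp O K := by
  rintro _ ⟨_, ⟨w, rfl⟩, rfl⟩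
  set u : Fˣ := Units.map E.subtype.toMonoidHom w
  obtain ⟨y, hyK, hy0, huy, hyu⟩ := him.1 u (hEM w.val.2) u.ne_zero
  refine ⟨Units.mk0 y hy0, ⟨Units.mk0 ⟨y, hyK⟩ fun h => hy0 congr(Subtype.val $h), rfl⟩,
    QuotientGroup.eq.2 ?_⟩
  refine O.valuation_eq_one_of_mem_of_inv_mem ((Units.mk0 y hy0)⁻¹ * u).ne_zero ?_ ?_
  · simpa [mul_comm] using huy
  · simpa [mul_comm] using hyu

theorem IsImmediateV.resSubfield_le {O : ValuationSubring F} {K M E : Subfield F}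
    (him : IsImmediateV O K M) (hEM : E ≤ M) : resSubfield O E ≤ resSubfield O K := by
  refine Subfield.closure_le.2 ?_
  rintro _ ⟨a, haE, rfl⟩
  obtain ⟨y, hyK, hay, hay'⟩ := him.2 a (hEM haE) a.2
  have hyO : y ∈ O := by simpa using O.sub_mem a.2 hay
  have hmax : a - ⟨y, hyO⟩ ∈ IsLocalRing.maximalIdeal O :=
    O.coe_mem_nonunits_iff.1 (O.mem_nonunits_iff_or.2 (or_iff_not_imp_left.2 hay'))
  have hres : IsLocalRing.residue O a = IsLocalRing.residue O ⟨y, hyO⟩ := by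
    rw [← sub_eq_zero, ← map_sub, IsLocalRing.residue_eq_zero_iff]
    exact hmax
  exact hres ▸ Subfield.subset_closure ⟨⟨y, hyO⟩, hyK, rfl⟩

theorem TameExt.eq_of_isImmediateV {O : ValuationSubring F} {K M : Subfield F}
    (ht : TameExt O K M) (halg : ∀ x ∈ M, AlgOver K x) (him : IsImmediateV O K M) : M = K := by
  refine le_antisymm (fun x hxM => ?_) ht.1
  obtain ⟨E, hKE, hfin, hxE, hEM⟩ := exists_finExt_mem_le ht.1 (halg x hxM).isIntegral hxM
  obtain ⟨hres, -, -, hdeg⟩ := ht.2 E hKE hEM hfin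
  rw [Subgroup.relIndex_eq_one.2 (him.vgrp_le hEM),
    (sdeg_eq_one_iff hres).2 (him.resSubfield_le hEM), one_mul] at hdeg
  exact (sdeg_eq_one_iff hKE).1 hdeg hxE

end TameImmediate

/-- Algebraic extensions of `K` are modelled as subfields of `Ω` containing `K`, with `Ω`
algebraic over `K`. -/
theorem stmt15_general {Ω : Type*} [Field Ω]
    (O : ValuationSubring Ω) (K : Subfield Ω)
    (halg : ∀ x : Ω, AlgOver K x) :
    -- if (K,v) is a tame field, then it is algebraically maximal:
    ((∀ M : Subfield Ω, K ≤ M → TameExt O K M) →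
      ∀ M : Subfield Ω, K ≤ M → IsImmediateV O K M → M = K) ∧
    -- if (K,v) is a separably tame field, then it is separable-algebraically maximal:
    ((∀ M : Subfield Ω, K ≤ M → (∀ x ∈ M, SepAlgOver K x) → TameExt O K M) →
      ∀ M : Subfield Ω, K ≤ M → (∀ x ∈ M, SepAlgOver K x) →
        IsImmediateV O K M → M = K) :=
  ⟨fun htame M hKM him => (htame M hKM).eq_of_isImmediateV (fun x _ => halg x) him,
    fun htame M hKM hsep him => (htame M hKM hsep).eq_of_isImmediateV (fun x _ => halg x) him⟩

/-- Every tame valued field is algebraically maximal, and every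
separably tame valued field is separable-algebraically maximal.  Formulated inside
a fixed algebraic closure: Ω is algebraically closed and algebraic over the
henselian subfield K, with valuation ring O; the (separable-)algebraic extensions
of K are exactly the (appropriate) subfields of Ω containing K. -/
theorem stmt15 {Ω : Type*} [Field Ω] [IsAlgClosed Ω]
    (O : ValuationSubring Ω) (K : Subfield Ω)
    (halg : ∀ x : Ω, AlgOver K x)
    (hhens : IsHenselianS O K) :
    -- if (K,v) is a tame field, then it is algebraically maximal:
    ((∀ M : Subfield Ω, K ≤ M → TameExt O K M) →
      ∀ M : Subfield Ω, K ≤ M → IsImmediateV O K M → M = K) ∧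
    -- if (K,v) is a separably tame field, then it is separable-algebraically maximal:
    ((∀ M : Subfield Ω, K ≤ M → (∀ x ∈ M, SepAlgOver K x) → TameExt O K M) →
      ∀ M : Subfield Ω, K ≤ M → (∀ x ∈ M, SepAlgOver K x) →
        IsImmediateV O K M → M = K) :=
  stmt15_general O K halg
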